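/- Let H ≥ 2, set z = H², and let X satisfy log H < (log X)/4 (so z² ≤ X^{1−ε} for small ε and large X). For d₁, d₂ ≤ z write D = gcd(d₁,d₂). Then Σ_{d₁,d₂ ≤ z, D ≤ H^{1−ε/4}} (τ(d₁²)/d₁)(τ(d₂²)/d₂)·D² · Σ_{λ ≥ 1} λ^{−2}·1[λH/D ≥ H^{ε/4}] ≪_ε H^{1−ε/4}(log H)^{23}. -/

import Mathlib

open Finset
open scoped Classical



/-- If `e ∣ a * b` and `a ≠ 0` then `e / gcd e a ∣ b`. -/
lemma aux_div_gcd_dvd {e a b : ℕ} (ha : a ≠ 0) (h : e ∣ a * b) :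
    e / Nat.gcd e a ∣ b := by
  have hg : 0 < Nat.gcd e a := Nat.gcd_pos_of_pos_right _ (Nat.pos_of_ne_zero ha)
  have hge : Nat.gcd e a ∣ e := Nat.gcd_dvd_left _ _
  have h1 : e ∣ Nat.gcd e a * b := by
    have : e ∣ Nat.gcd (a * b) (e * b) := Nat.dvd_gcd h (Dvd.intro b rfl)
    rwa [Nat.gcd_mul_right, Nat.gcd_comm a e] at this
  obtain ⟨c, hc⟩ := h1
  refine ⟨c, ?_⟩
  have he : Nat.gcd e a * (e / Nat.gcd e a) = e := Nat.mul_div_cancel' hge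
  apply Nat.eq_of_mul_eq_mul_left hg
  rw [← mul_assoc, he, ← hc]

/-- Submultiplicativity of the divisor-counting function. -/
lemma aux_tau_mul_le {a b : ℕ} (ha : a ≠ 0) (hb : b ≠ 0) :
    (a * b).divisors.card ≤ a.divisors.card * b.divisors.card := by
  rw [← Finset.card_product]
  apply Finset.card_le_card_of_injOn (fun e => (Nat.gcd e a, e / Nat.gcd e a))
  · intro e he
    rw [Finset.mem_coe, Nat.mem_divisors] at he
    rw [Finset.mem_coe, Finset.mem_product, Nat.mem_divisors, Nat.mem_divisors]
    exact ⟨⟨Nat.gcd_dvd_right _ _, ha⟩, aux_div_gcd_dvd ha he.1, hb⟩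
  · intro x hx y hy hxy
    simp only [Prod.mk.injEq] at hxy
    have hx' : Nat.gcd x a * (x / Nat.gcd x a) = x := Nat.mul_div_cancel' (Nat.gcd_dvd_left _ _)
    have hy' : Nat.gcd y a * (y / Nat.gcd y a) = y := Nat.mul_div_cancel' (Nat.gcd_dvd_left _ _)
    rw [← hx', ← hy', hxy.2, hxy.1]

/-- `τ₃ m = ∑_{y ∣ m} τ(y)`. -/
def tau3 (m : ℕ) : ℕ := ∑ y ∈ m.divisors, y.divisors.card

lemma aux_tau_sq_le_tau3 {m : ℕ} (hm : m ≠ 0) :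
    (m ^ 2).divisors.card ≤ tau3 m := by
  have hm2 : m ^ 2 ≠ 0 := pow_ne_zero _ hm
  rw [tau3, ← Finset.card_sigma]
  apply Finset.card_le_card_of_injOn (fun e => ⟨Nat.gcd e m, e / Nat.gcd e m⟩)
  · intro e he
    rw [Finset.mem_coe, Nat.mem_divisors] at he
    have he0 : e ≠ 0 := by rintro rfl; exact hm2 (Nat.eq_zero_of_zero_dvd he.1)
    have hg : Nat.gcd e m ≠ 0 := Nat.gcd_ne_zero_right hm
    have hx0 : e / Nat.gcd e m ≠ 0 := by
      have := Nat.div_pos (Nat.le_of_dvd (Nat.pos_of_ne_zero he0) (Nat.gcd_dvd_left e m))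
        (Nat.pos_of_ne_zero hg)
      exact this.ne'
    have hdvd : e / Nat.gcd e m ∣ Nat.gcd e m := by
      rw [← Nat.factorization_le_iff_dvd hx0 hg]
      rw [Nat.factorization_div (Nat.gcd_dvd_left e m), Nat.factorization_gcd he0 hm]
      intro p
      have hle : e.factorization ≤ (m ^ 2).factorization :=
        (Nat.factorization_le_iff_dvd he0 hm2).2 he.1
      have := hle p
      rw [Nat.factorization_pow] at this
      simp only [Finsupp.tsub_apply, Finsupp.inf_apply, Finsupp.smul_apply, smul_eq_mul] at *
      omega
    rw [Finset.mem_coe, Finset.mem_sigma, Nat.mem_divisors, Nat.mem_divisors]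
    exact ⟨⟨Nat.gcd_dvd_right _ _, hm⟩, hdvd, hg⟩
  · intro x hx y hy hxy
    simp only [Sigma.mk.inj_iff] at hxy
    have hx' : Nat.gcd x m * (x / Nat.gcd x m) = x := Nat.mul_div_cancel' (Nat.gcd_dvd_left _ _)
    have hy' : Nat.gcd y m * (y / Nat.gcd y m) = y := Nat.mul_div_cancel' (Nat.gcd_dvd_left _ _)
    rw [← hx', ← hy', hxy.1]
    rw [hxy.1] at hxy
    rw [heq_eq_eq] at hxy
    rw [hxy.2]

lemma aux_tau3_le {m : ℕ} (hm : m ≠ 0) :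
    tau3 m ≤ m.divisors.card ^ 2 := by
  rw [tau3, sq]
  calc ∑ y ∈ m.divisors, y.divisors.card ≤ ∑ y ∈ m.divisors, m.divisors.card := by
        apply Finset.sum_le_sum
        intro y hy
        rw [Nat.mem_divisors] at hy
        exact Finset.card_le_card (Nat.divisors_subset_of_dvd hm hy.1)
    _ = m.divisors.card * m.divisors.card := by rw [Finset.sum_const, smul_eq_mul]
/-- harmonic sum over Icc 1 z -/
lemma aux_harmonic (z : ℕ) : ∑ e ∈ Icc 1 z, (1 : ℝ) / e ≤ 1 + Real.log z := by
  have h1 : ∑ e ∈ Icc 1 z, (1 : ℝ) / e = (harmonic z : ℝ) := by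
    rw [harmonic_eq_sum_Icc]
    push_cast
    simp [one_div]
  rw [h1]
  exact harmonic_le_one_add_log z

/-- partial sums of 1/(l+1)^2 -/
lemma aux_basel_partial (n : ℕ) : ∑ i ∈ Finset.range n, (1:ℝ) / ((i:ℝ)+1)^2 ≤ 2 - 2/((n:ℝ)+1) := by
  induction n with
  | zero => simp
  | succ n ih =>
    rw [Finset.sum_range_succ]
    have hn : (0:ℝ) < (n:ℝ) + 1 := by positivity
    have hn2 : (0:ℝ) < (n:ℝ) + 2 := by positivity
    have key : (1:ℝ) / ((n:ℝ)+1)^2 + 2/((n:ℝ)+2) ≤ 2/((n:ℝ)+1) := by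
      rw [div_add_div _ _ (by positivity) (by positivity), div_le_div_iff₀ (by positivity) hn]
      nlinarith
    push_cast
    have he : ((n:ℝ)+1+1) = (n:ℝ)+2 := by ring
    rw [he]
    linarith

lemma aux_basel : Summable (fun l : ℕ => (1:ℝ) / ((l:ℝ)+1)^2) ∧
    ∑' l : ℕ, (1:ℝ) / ((l:ℝ)+1)^2 ≤ 2 := by
  have hs : Summable (fun l : ℕ => (1:ℝ) / ((l:ℝ)+1)^2) := by
    have := Real.summable_one_div_nat_pow.2 (le_refl 2)
    have h2 := (summable_nat_add_iff 1).2 this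
    refine h2.congr fun l => ?_
    push_cast
    ring_nf
  refine ⟨hs, Summable.tsum_le_of_sum_range_le hs fun n => ?_⟩
  have h1 := aux_basel_partial n
  have h2 : (0:ℝ) ≤ 2/((n:ℝ)+1) := by positivity
  linarith

lemma aux_swap (z : ℕ) (G : ℕ → ℕ → ℝ) (hG : ∀ a b, 0 ≤ G a b) :
    ∑ e ∈ Icc 1 z, ∑ p ∈ e.divisorsAntidiagonal, G p.1 p.2 ≤
      ∑ a ∈ Icc 1 z, ∑ b ∈ Icc 1 z, G a b := by
  set S := (Icc 1 z).sigma (fun e => e.divisorsAntidiagonal) with hS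
  have hmem : ∀ x ∈ S, x.2.1 * x.2.2 = x.1 ∧ x.1 ∈ Icc 1 z := by
    intro x hx
    rw [hS, Finset.mem_sigma] at hx
    exact ⟨(Nat.mem_divisorsAntidiagonal.1 hx.2).1, hx.1⟩
  have hinj : ∀ x ∈ S, ∀ y ∈ S, x.2 = y.2 → x = y := by
    intro x hx y hy hxy
    obtain ⟨hx1, _⟩ := hmem x hx
    obtain ⟨hy1, _⟩ := hmem y hy
    obtain ⟨e1, p1⟩ := x
    obtain ⟨e2, p2⟩ := y
    simp only at hxy
    subst hxy
    simp only at hx1 hy1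
    have : e1 = e2 := by rw [← hx1, ← hy1]
    subst this
    rfl
  calc ∑ e ∈ Icc 1 z, ∑ p ∈ e.divisorsAntidiagonal, G p.1 p.2
      = ∑ x ∈ S, G x.2.1 x.2.2 := by rw [Finset.sum_sigma']
    _ = ∑ p ∈ Finset.image (fun x : Σ _ : ℕ, ℕ × ℕ => x.2) S, G p.1 p.2 := by
        rw [Finset.sum_image (f := fun p : ℕ × ℕ => G p.1 p.2) hinj]
    _ ≤ ∑ p ∈ Icc 1 z ×ˢ Icc 1 z, G p.1 p.2 := by
        apply Finset.sum_le_sum_of_subset_of_nonneg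
        · intro p hp
          rw [Finset.mem_image] at hp
          obtain ⟨x, hx, rfl⟩ := hp
          obtain ⟨h1, h2⟩ := hmem x hx
          rw [Finset.mem_Icc] at h2
          rw [Finset.mem_product, Finset.mem_Icc, Finset.mem_Icc]
          have hx1 : x.1 ≠ 0 := by omega
          have ha : x.2.1 ≠ 0 := by rintro h; rw [h] at h1; simp at h1; omega
          have hb : x.2.2 ≠ 0 := by rintro h; rw [h] at h1; simp at h1; omega
          have ha2 : x.2.1 ≤ x.1 := Nat.le_of_dvd (by omega) ⟨x.2.2, h1.symm⟩
          have hb2 : x.2.2 ≤ x.1 := Nat.le_of_dvd (by omega) ⟨x.2.1, by rw [mul_comm]; exact h1.symm⟩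
          omega
        · intro p _ _; exact hG p.1 p.2
    _ = ∑ a ∈ Icc 1 z, ∑ b ∈ Icc 1 z, G a b := Finset.sum_product _ _ _

lemma aux_card_antidiag (e : ℕ) : e.divisorsAntidiagonal.card = e.divisors.card := by
  rw [Finset.card_eq_sum_ones, Finset.card_eq_sum_ones]
  exact Nat.sum_divisorsAntidiagonal (fun (_ _ : ℕ) => (1:ℕ))

lemma aux_moment (z : ℕ) (k : ℕ) :
    ∑ e ∈ Icc 1 z, ((e.divisors.card : ℝ))^k / e ≤ (1 + Real.log z)^(2^k) := by
  induction k with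
  | zero =>
    rw [show (2:ℕ)^0 = 1 from rfl, pow_one]
    simp only [pow_zero]
    exact aux_harmonic z
  | succ k ih =>
    have hM0 : (0:ℝ) ≤ ∑ e ∈ Icc 1 z, ((e.divisors.card : ℝ))^k / e := by
      apply Finset.sum_nonneg; intro e _; positivity
    have step1 : ∑ e ∈ Icc 1 z, ((e.divisors.card : ℝ))^(k+1) / e ≤
        ∑ e ∈ Icc 1 z, ∑ p ∈ e.divisorsAntidiagonal,
          (((p.1.divisors.card : ℝ))^k / p.1) * (((p.2.divisors.card : ℝ))^k / p.2) := by
      apply Finset.sum_le_sum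
      intro e he
      rw [Finset.mem_Icc] at he
      have he0 : e ≠ 0 := by omega
      have hexp : ((e.divisors.card : ℝ))^(k+1) / e =
          ∑ _p ∈ e.divisorsAntidiagonal, ((e.divisors.card : ℝ))^k / e := by
        rw [Finset.sum_const, aux_card_antidiag, nsmul_eq_mul, pow_succ]
        ring
      rw [hexp]
      apply Finset.sum_le_sum
      intro p hp
      obtain ⟨hpe, -⟩ := Nat.mem_divisorsAntidiagonal.1 hp
      have ha : p.1 ≠ 0 := by rintro h; rw [h] at hpe; simp at hpe; exact he0 hpe.symm
      have hb : p.2 ≠ 0 := by rintro h; rw [h] at hpe; simp at hpe; exact he0 hpe.symm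
      have htau : ((e.divisors.card : ℝ)) ≤ (p.1.divisors.card : ℝ) * (p.2.divisors.card : ℝ) := by
        rw [← hpe]
        exact_mod_cast aux_tau_mul_le ha hb
      have htau0 : (0:ℝ) ≤ (e.divisors.card : ℝ) := by positivity
      have hk : ((e.divisors.card : ℝ))^k ≤ ((p.1.divisors.card : ℝ) * (p.2.divisors.card : ℝ))^k :=
        pow_le_pow_left₀ htau0 htau k
      have hepos : (0:ℝ) < e := by exact_mod_cast Nat.pos_of_ne_zero he0
      have hp1 : (0:ℝ) < p.1 := by exact_mod_cast Nat.pos_of_ne_zero ha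
      have hp2 : (0:ℝ) < p.2 := by exact_mod_cast Nat.pos_of_ne_zero hb
      calc ((e.divisors.card : ℝ))^k / e
          ≤ ((p.1.divisors.card : ℝ) * (p.2.divisors.card : ℝ))^k / e := by gcongr
        _ = (((p.1.divisors.card : ℝ))^k / p.1) * (((p.2.divisors.card : ℝ))^k / p.2) := by
            rw [← hpe, mul_pow]
            push_cast
            field_simp
            try ring
    have step2 := aux_swap z
      (fun a b => (((a.divisors.card : ℝ))^k / a) * (((b.divisors.card : ℝ))^k / b))
      (by intro a b; positivity)
    have step3 : ∑ a ∈ Icc 1 z, ∑ b ∈ Icc 1 z,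
        (((a.divisors.card : ℝ))^k / a) * (((b.divisors.card : ℝ))^k / b)
        = (∑ e ∈ Icc 1 z, ((e.divisors.card : ℝ))^k / e) ^ 2 := by
      rw [sq, Finset.sum_mul_sum]
    have hfinal : (∑ e ∈ Icc 1 z, ((e.divisors.card : ℝ))^k / e) ^ 2 ≤
        ((1 + Real.log z)^(2^k))^2 := by
      apply pow_le_pow_left₀ hM0 ih
    calc ∑ e ∈ Icc 1 z, ((e.divisors.card : ℝ))^(k+1) / e
        ≤ ∑ a ∈ Icc 1 z, ∑ b ∈ Icc 1 z,
          (((a.divisors.card : ℝ))^k / a) * (((b.divisors.card : ℝ))^k / b) :=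
          le_trans step1 step2
      _ = (∑ e ∈ Icc 1 z, ((e.divisors.card : ℝ))^k / e) ^ 2 := step3
      _ ≤ ((1 + Real.log z)^(2^k))^2 := hfinal
      _ = (1 + Real.log z)^(2^(k+1)) := by rw [← pow_mul, ← pow_succ]

lemma aux_B3 (z : ℕ) : ∑ m ∈ Icc 1 z, (tau3 m : ℝ)/m ≤ (1 + Real.log z)^3 := by
  by_cases hz : 1 ≤ z
  swap
  · interval_cases z
    simp
  have hL0 : (0:ℝ) ≤ 1 + Real.log z := by
    have : (0:ℝ) ≤ Real.log z := Real.log_natCast_nonneg z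
    linarith
  have step1 : ∀ m ∈ Icc 1 z, (tau3 m:ℝ)/m =
      ∑ p ∈ m.divisorsAntidiagonal, ((p.1.divisors.card:ℝ)/p.1) * (1/(p.2:ℝ)) := by
    intro m hm
    have hm' := Finset.mem_Icc.1 hm
    have hm0 : m ≠ 0 := by omega
    rw [Nat.sum_divisorsAntidiagonal (f := fun a b => ((a.divisors.card:ℝ)/a) * (1/(b:ℝ)))]
    rw [tau3]
    push_cast
    rw [Finset.sum_div]
    apply Finset.sum_congr rfl
    intro i hi
    rw [Nat.mem_divisors] at hi
    have hi0 : i ≠ 0 := by rintro rfl; exact hm0 (Nat.eq_zero_of_zero_dvd hi.1)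
    have hmi : i * (m/i) = m := Nat.mul_div_cancel' hi.1
    have hmi0 : m / i ≠ 0 := by
      intro h; rw [h, mul_zero] at hmi; exact hm0 hmi.symm
    have hmr : (m:ℝ) = (i:ℝ) * ((m/i : ℕ):ℝ) := by exact_mod_cast hmi.symm
    rw [hmr, div_mul_div_comm, mul_one]
  rw [Finset.sum_congr rfl step1]
  have h2 := aux_swap z (fun a b => ((a.divisors.card:ℝ)/a) * (1/(b:ℝ)))
    (by intro a b; positivity)
  refine le_trans h2 ?_
  have h3 : ∑ a ∈ Icc 1 z, ∑ b ∈ Icc 1 z, ((a.divisors.card:ℝ)/a) * (1/(b:ℝ))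
      = (∑ a ∈ Icc 1 z, (a.divisors.card:ℝ)/a) * (∑ b ∈ Icc 1 z, 1/(b:ℝ)) := by
    rw [Finset.sum_mul_sum]
  rw [h3]
  have hm1 : ∑ a ∈ Icc 1 z, (a.divisors.card:ℝ)/a ≤ (1 + Real.log z)^2 := by
    have := aux_moment z 1
    simpa using this
  have hm0 : ∑ b ∈ Icc 1 z, (1:ℝ)/(b:ℝ) ≤ 1 + Real.log z := aux_harmonic z
  calc (∑ a ∈ Icc 1 z, (a.divisors.card:ℝ)/a) * (∑ b ∈ Icc 1 z, 1/(b:ℝ))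
      ≤ (1 + Real.log z)^2 * (1 + Real.log z) := by
        apply mul_le_mul hm1 hm0 (Finset.sum_nonneg fun b _ => by positivity) (by positivity)
    _ = (1 + Real.log z)^3 := by ring

lemma aux_A_bound (z e : ℕ) (he : e ∈ Icc 1 z) :
    ∑ d ∈ Icc 1 z, (if e ∣ d then ((d^2).divisors.card:ℝ)/d else 0)
      ≤ ((tau3 e : ℝ)/e) * ∑ m ∈ Icc 1 z, (tau3 m : ℝ)/m := by
  rw [← Finset.sum_filter]
  have he' := Finset.mem_Icc.1 he
  have he0 : e ≠ 0 := by omega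
  have key : ∀ d ∈ (Icc 1 z).filter (e ∣ ·),
      ((d^2).divisors.card:ℝ)/d ≤ ((tau3 e:ℝ)/e) * ((tau3 (d/e):ℝ)/((d/e : ℕ):ℝ)) := by
    intro d hd
    rw [Finset.mem_filter, Finset.mem_Icc] at hd
    obtain ⟨⟨hd1, hdz⟩, hed⟩ := hd
    have hd0 : d ≠ 0 := by omega
    have hm : e * (d/e) = d := Nat.mul_div_cancel' hed
    have hm0 : d / e ≠ 0 := by
      intro h; rw [h, mul_zero] at hm; exact hd0 hm.symm
    have h1 : (d^2).divisors.card ≤ tau3 e * tau3 (d/e) := by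
      calc (d^2).divisors.card = ((e * (d/e))^2).divisors.card := by rw [hm]
        _ = (e^2 * (d/e)^2).divisors.card := by rw [mul_pow]
        _ ≤ (e^2).divisors.card * ((d/e)^2).divisors.card :=
            aux_tau_mul_le (pow_ne_zero _ he0) (pow_ne_zero _ hm0)
        _ ≤ tau3 e * tau3 (d/e) :=
            Nat.mul_le_mul (aux_tau_sq_le_tau3 he0) (aux_tau_sq_le_tau3 hm0)
    have hdr : (d:ℝ) = (e:ℝ) * ((d/e : ℕ):ℝ) := by exact_mod_cast hm.symm
    have hep : (0:ℝ) < e := by exact_mod_cast Nat.pos_of_ne_zero he0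
    have hmp : (0:ℝ) < ((d/e : ℕ):ℝ) := by exact_mod_cast Nat.pos_of_ne_zero hm0
    calc ((d^2).divisors.card:ℝ)/d ≤ ((tau3 e:ℝ) * (tau3 (d/e):ℝ))/(d:ℝ) := by
          gcongr
          exact_mod_cast h1
      _ = ((tau3 e:ℝ)/e) * ((tau3 (d/e):ℝ)/((d/e : ℕ):ℝ)) := by
          rw [hdr, div_mul_div_comm]
  calc ∑ d ∈ (Icc 1 z).filter (e ∣ ·), ((d^2).divisors.card:ℝ)/d
      ≤ ∑ d ∈ (Icc 1 z).filter (e ∣ ·), ((tau3 e:ℝ)/e) * ((tau3 (d/e):ℝ)/((d/e : ℕ):ℝ)) :=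
        Finset.sum_le_sum key
    _ = ∑ m ∈ Finset.image (· / e) ((Icc 1 z).filter (e ∣ ·)),
          ((tau3 e:ℝ)/e) * ((tau3 m:ℝ)/(m:ℝ)) := by
        rw [Finset.sum_image]
        intro x hx y hy hxy
        rw [Finset.mem_coe, Finset.mem_filter] at hx hy
        have hx' : e * (x/e) = x := Nat.mul_div_cancel' hx.2
        have hy' : e * (y/e) = y := Nat.mul_div_cancel' hy.2
        rw [← hx', ← hy', show x / e = y / e from hxy]
    _ ≤ ∑ m ∈ Icc 1 z, ((tau3 e:ℝ)/e) * ((tau3 m:ℝ)/(m:ℝ)) := by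
        apply Finset.sum_le_sum_of_subset_of_nonneg
        · intro m hm
          rw [Finset.mem_image] at hm
          obtain ⟨d, hd, rfl⟩ := hm
          rw [Finset.mem_filter, Finset.mem_Icc] at hd
          rw [Finset.mem_Icc]
          constructor
          · rw [Nat.one_le_div_iff (by omega)]
            exact Nat.le_of_dvd (by omega) hd.2
          · exact le_trans (Nat.div_le_self _ _) hd.1.2
        · intro m _ _; positivity
    _ = ((tau3 e : ℝ)/e) * ∑ m ∈ Icc 1 z, (tau3 m : ℝ)/m := by rw [Finset.mul_sum]


set_option maxHeartbeats 2000000 in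
/-- With `z = H²` and `log H < (log X)/4`, writing `D = gcd(d₁,d₂)`:
`∑_{d₁,d₂ ≤ z, D ≤ H^{1-ε/4}} (τ(d₁²)/d₁)(τ(d₂²)/d₂)·D²·∑_{λ≥1} λ⁻²·1[λH/D ≥ H^{ε/4}]
  ≪_ε H^{1-ε/4}(log H)^{23}`. -/
theorem off_main_sin_tail_bound (ε : ℝ) (hε0 : 0 < ε) (hε1 : ε < 1) :
    ∃ C > 0, ∀ H : ℕ, 2 ≤ H → ∀ X : ℝ, Real.log H < Real.log X / 4 →
      ∑ d₁ ∈ Finset.Icc 1 (H ^ 2), ∑ d₂ ∈ Finset.Icc 1 (H ^ 2),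
          (if (Nat.gcd d₁ d₂ : ℝ) ≤ (H : ℝ) ^ (1 - ε / 4) then
            (((d₁ ^ 2).divisors.card : ℝ) / d₁) * (((d₂ ^ 2).divisors.card : ℝ) / d₂) *
              (Nat.gcd d₁ d₂ : ℝ) ^ 2 *
              ∑' l : ℕ,
                (if (H : ℝ) ^ (ε / 4) ≤ ((l : ℝ) + 1) * H / (Nat.gcd d₁ d₂ : ℝ) then
                  1 / ((l : ℝ) + 1) ^ 2 else 0)
          else 0) ≤
        C * (H : ℝ) ^ (1 - ε / 4) * Real.log H ^ 23 := by
  refine ⟨(4:ℝ)^23, by positivity, ?_⟩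
  intro H hH X _
  have hHR : (2:ℝ) ≤ (H:ℝ) := by exact_mod_cast hH
  have hHR0 : (0:ℝ) < H := by linarith
  set z : ℕ := H^2 with hz
  set Hp : ℝ := (H:ℝ)^(1-ε/4) with hHp
  have hHp0 : (0:ℝ) < Hp := Real.rpow_pos_of_pos hHR0 _
  -- abbreviations
  set f : ℕ → ℝ := fun d => ((d^2).divisors.card : ℝ)/d with hf
  have hf0 : ∀ d, 0 ≤ f d := by intro d; rw [hf]; positivity
  set q : ℕ → ℕ → ℝ := fun e d => if e ∣ d then f d else 0 with hq
  have hq0 : ∀ e d, 0 ≤ q e d := by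
    intro e d; rw [hq]; dsimp only; split_ifs; exacts [hf0 d, le_refl 0]
  set A : ℕ → ℝ := fun e => ∑ d ∈ Icc 1 z, q e d with hA
  have hA0 : ∀ e, 0 ≤ A e := fun e => Finset.sum_nonneg fun d _ => hq0 e d
  set B : ℝ := ∑ m ∈ Icc 1 z, (tau3 m : ℝ)/m with hB
  have hB0 : (0:ℝ) ≤ B := Finset.sum_nonneg fun m _ => by positivity
  set L : ℝ := 1 + Real.log z with hL
  -- Step A : termwise bound
  have stepA : ∀ d₁ ∈ Icc 1 z, ∀ d₂ ∈ Icc 1 z,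
      (if (Nat.gcd d₁ d₂ : ℝ) ≤ Hp then
        f d₁ * f d₂ * (Nat.gcd d₁ d₂ : ℝ) ^ 2 *
          ∑' l : ℕ, (if (H : ℝ) ^ (ε / 4) ≤ ((l : ℝ) + 1) * H / (Nat.gcd d₁ d₂ : ℝ) then
            1 / ((l : ℝ) + 1) ^ 2 else 0)
      else 0) ≤ 2 * Hp * ∑ e ∈ Icc 1 z, (e:ℝ) * q e d₁ * q e d₂ := by
    intro d₁ hd₁ d₂ hd₂
    rw [Finset.mem_Icc] at hd₁ hd₂
    have hsum0 : (0:ℝ) ≤ ∑ e ∈ Icc 1 z, (e:ℝ) * q e d₁ * q e d₂ :=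
      Finset.sum_nonneg fun e _ =>
        mul_nonneg (mul_nonneg (Nat.cast_nonneg e) (hq0 e d₁)) (hq0 e d₂)
    split_ifs with hcond
    swap
    · positivity
    set g : ℕ := Nat.gcd d₁ d₂ with hg
    have hg1 : 1 ≤ g := Nat.gcd_pos_of_pos_left _ (by omega)
    have hgz : g ≤ z := le_trans (Nat.gcd_le_left _ (by omega)) hd₁.2
    have hgR : (0:ℝ) ≤ (g:ℝ) := Nat.cast_nonneg g
    -- tail bound
    have h0 : ∀ l : ℕ, (0:ℝ) ≤
        (if (H : ℝ) ^ (ε / 4) ≤ ((l : ℝ) + 1) * H / (g : ℝ) then 1 / ((l : ℝ) + 1) ^ 2 else 0) := by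
      intro l; split_ifs
      exacts [by positivity, le_refl 0]
    have hle : ∀ l : ℕ,
        (if (H : ℝ) ^ (ε / 4) ≤ ((l : ℝ) + 1) * H / (g : ℝ) then 1 / ((l : ℝ) + 1) ^ 2 else 0)
          ≤ 1 / ((l : ℝ) + 1) ^ 2 := by
      intro l; split_ifs
      exacts [le_refl _, by positivity]
    have htail2 : (∑' l : ℕ, (if (H : ℝ) ^ (ε / 4) ≤ ((l : ℝ) + 1) * H / (g : ℝ) then
        1 / ((l : ℝ) + 1) ^ 2 else 0)) ≤ 2 :=
      le_trans (Summable.tsum_le_tsum hle (aux_basel.1.of_nonneg_of_le h0 hle) aux_basel.1) aux_basel.2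
    have htail0 : (0:ℝ) ≤ ∑' l : ℕ, (if (H : ℝ) ^ (ε / 4) ≤ ((l : ℝ) + 1) * H / (g : ℝ) then
        1 / ((l : ℝ) + 1) ^ 2 else 0) := tsum_nonneg h0
    have hsingle : f d₁ * f d₂ * (g:ℝ) ≤ ∑ e ∈ Icc 1 z, (e:ℝ) * q e d₁ * q e d₂ := by
      have hmem : g ∈ Icc 1 z := Finset.mem_Icc.2 ⟨hg1, hgz⟩
      have := Finset.single_le_sum (f := fun e : ℕ => (e:ℝ) * q e d₁ * q e d₂)
        (fun e _ => mul_nonneg (mul_nonneg (Nat.cast_nonneg e) (hq0 e d₁)) (hq0 e d₂)) hmem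
      have hval : (g:ℝ) * q g d₁ * q g d₂ = f d₁ * f d₂ * (g:ℝ) := by
        rw [hq]; dsimp only
        rw [if_pos (Nat.gcd_dvd_left d₁ d₂), if_pos (Nat.gcd_dvd_right d₁ d₂)]
        ring
      rw [hval] at this
      exact this
    calc f d₁ * f d₂ * (g:ℝ)^2 * (∑' l : ℕ, (if (H : ℝ) ^ (ε / 4) ≤ ((l : ℝ) + 1) * H / (g : ℝ)
          then 1 / ((l : ℝ) + 1) ^ 2 else 0))
        ≤ f d₁ * f d₂ * (g:ℝ)^2 * 2 := by
          apply mul_le_mul_of_nonneg_left htail2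
          have := hf0 d₁; have := hf0 d₂; positivity
      _ = 2 * ((f d₁ * f d₂ * (g:ℝ)) * (g:ℝ)) := by ring
      _ ≤ 2 * ((f d₁ * f d₂ * (g:ℝ)) * Hp) := by
          apply mul_le_mul_of_nonneg_left _ (by norm_num)
          apply mul_le_mul_of_nonneg_left hcond
          have := hf0 d₁; have := hf0 d₂; positivity
      _ = 2 * Hp * (f d₁ * f d₂ * (g:ℝ)) := by ring
      _ ≤ 2 * Hp * ∑ e ∈ Icc 1 z, (e:ℝ) * q e d₁ * q e d₂ := by
          apply mul_le_mul_of_nonneg_left hsingle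
          positivity
  -- assemble
  calc ∑ d₁ ∈ Finset.Icc 1 z, ∑ d₂ ∈ Finset.Icc 1 z,
        (if (Nat.gcd d₁ d₂ : ℝ) ≤ Hp then
          f d₁ * f d₂ * (Nat.gcd d₁ d₂ : ℝ) ^ 2 *
            ∑' l : ℕ, (if (H : ℝ) ^ (ε / 4) ≤ ((l : ℝ) + 1) * H / (Nat.gcd d₁ d₂ : ℝ) then
              1 / ((l : ℝ) + 1) ^ 2 else 0)
        else 0)
      ≤ ∑ d₁ ∈ Icc 1 z, ∑ d₂ ∈ Icc 1 z, 2 * Hp * ∑ e ∈ Icc 1 z, (e:ℝ) * q e d₁ * q e d₂ := by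
        apply Finset.sum_le_sum
        intro d₁ hd₁
        apply Finset.sum_le_sum
        intro d₂ hd₂
        exact stepA d₁ hd₁ d₂ hd₂
    _ = 2 * Hp * ∑ e ∈ Icc 1 z, (e:ℝ) * (A e)^2 := by
        simp only [← Finset.mul_sum]
        congr 1
        have h1 : ∀ d₁ : ℕ, ∑ d₂ ∈ Icc 1 z, ∑ e ∈ Icc 1 z, (e:ℝ) * q e d₁ * q e d₂
            = ∑ e ∈ Icc 1 z, ∑ d₂ ∈ Icc 1 z, (e:ℝ) * q e d₁ * q e d₂ :=
          fun d₁ => Finset.sum_comm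
        rw [Finset.sum_congr rfl (fun d₁ _ => h1 d₁), Finset.sum_comm]
        apply Finset.sum_congr rfl
        intro e _
        rw [hA]; dsimp only
        rw [sq, Finset.sum_mul_sum, Finset.mul_sum]
        apply Finset.sum_congr rfl
        intro d₂ _
        rw [Finset.mul_sum]
        apply Finset.sum_congr rfl
        intro d₁ _
        ring
    _ ≤ 2 * Hp * (B^2 * ∑ e ∈ Icc 1 z, ((e.divisors.card:ℝ))^4/e) := by
        apply mul_le_mul_of_nonneg_left _ (by positivity)
        calc ∑ e ∈ Icc 1 z, (e:ℝ) * (A e)^2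
            ≤ ∑ e ∈ Icc 1 z, B^2 * (((e.divisors.card:ℝ))^4/e) := by
              apply Finset.sum_le_sum
              intro e he
              have he' := Finset.mem_Icc.1 he
              have he0 : e ≠ 0 := by omega
              have hep : (0:ℝ) < e := by exact_mod_cast Nat.pos_of_ne_zero he0
              have hbd : A e ≤ ((tau3 e : ℝ)/e) * B := by
                rw [hA, hB, hq]; exact aux_A_bound z e he
              have hsq : (A e)^2 ≤ (((tau3 e : ℝ)/e) * B)^2 :=
                pow_le_pow_left₀ (hA0 e) hbd 2
              have htau4 : (tau3 e : ℝ)^2 ≤ ((e.divisors.card:ℝ))^4 := by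
                have := aux_tau3_le he0
                have h2 : (tau3 e : ℝ) ≤ ((e.divisors.card:ℝ))^2 := by exact_mod_cast this
                calc (tau3 e : ℝ)^2 ≤ (((e.divisors.card:ℝ))^2)^2 :=
                      pow_le_pow_left₀ (by positivity) h2 2
                  _ = ((e.divisors.card:ℝ))^4 := by ring
              calc (e:ℝ) * (A e)^2 ≤ (e:ℝ) * (((tau3 e : ℝ)/e) * B)^2 := by
                    apply mul_le_mul_of_nonneg_left hsq (by positivity)
                _ = B^2 * ((tau3 e : ℝ)^2/e) := by
                    field_simp
                _ ≤ B^2 * (((e.divisors.card:ℝ))^4/e) := by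
                    gcongr
          _ = B^2 * ∑ e ∈ Icc 1 z, ((e.divisors.card:ℝ))^4/e := by rw [Finset.mul_sum]
    _ ≤ 2 * Hp * (((1 + Real.log z)^3)^2 * (1 + Real.log z)^(16)) := by
        apply mul_le_mul_of_nonneg_left _ (by positivity)
        have hB3 : B ≤ (1 + Real.log z)^3 := by rw [hB]; exact aux_B3 z
        have hM4 : ∑ e ∈ Icc 1 z, ((e.divisors.card:ℝ))^4/e ≤ (1 + Real.log z)^(16) := by
          have := aux_moment z 4
          norm_num at this
          exact this
        have hM40 : (0:ℝ) ≤ ∑ e ∈ Icc 1 z, ((e.divisors.card:ℝ))^4/e :=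
          Finset.sum_nonneg fun e _ => by positivity
        have hL0 : (0:ℝ) ≤ 1 + Real.log z := by
          have : (0:ℝ) ≤ Real.log z := Real.log_natCast_nonneg z
          linarith
        apply mul_le_mul (pow_le_pow_left₀ hB0 hB3 2) hM4 hM40 (by positivity)
    _ ≤ (4:ℝ)^23 * Hp * Real.log H ^ 23 := by
        have hlog2 : (0.6931471803:ℝ) < Real.log 2 := Real.log_two_gt_d9
        have hlogH : Real.log 2 ≤ Real.log H := Real.log_le_log (by norm_num) hHR
        have hzr : ((z:ℕ):ℝ) = (H:ℝ)^2 := by rw [hz]; push_cast; ring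
        have hLeq : 1 + Real.log z = 1 + 2 * Real.log H := by
          rw [hzr, Real.log_pow]; push_cast; ring
        have hlogH0 : (0:ℝ) < Real.log H := by linarith
        have hL4 : 1 + Real.log z ≤ 4 * Real.log H := by rw [hLeq]; linarith
        have hL0 : (0:ℝ) ≤ 1 + Real.log z := by rw [hLeq]; linarith
        have hpow : ((1 + Real.log z)^3)^2 * (1 + Real.log z)^(16) = (1 + Real.log z)^22 := by
          ring
        rw [hpow]
        have h22 : (1 + Real.log z)^22 ≤ (4 * Real.log H)^22 :=
          pow_le_pow_left₀ hL0 hL4 22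
        calc 2 * Hp * (1 + Real.log z)^22 ≤ 2 * Hp * (4 * Real.log H)^22 := by
              apply mul_le_mul_of_nonneg_left h22 (by positivity)
          _ = 2 * (4:ℝ)^22 * Hp * Real.log H ^ 22 := by rw [mul_pow]; ring
          _ ≤ (4:ℝ)^23 * Hp * Real.log H ^ 23 := by
              have hkey : (2:ℝ) ≤ 4 * Real.log H := by linarith
              have h1 : (0:ℝ) ≤ (4:ℝ)^22 * Hp * Real.log H ^ 22 := by positivity
              calc 2 * (4:ℝ)^22 * Hp * Real.log H ^ 22
                  = 2 * ((4:ℝ)^22 * Hp * Real.log H ^ 22) := by ring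
                _ ≤ (4 * Real.log H) * ((4:ℝ)^22 * Hp * Real.log H ^ 22) :=
                    mul_le_mul_of_nonneg_right hkey h1
                _ = (4:ℝ)^23 * Hp * Real.log H ^ 23 := by ring
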